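/- arXiv:2012.13480 — 11 statements merged into one kernel-verified Lean document; each statement's English description precedes it below -/
import Mathlib

section
/- For every real number x > 0, log x = ∫₀¹ ((1 - t + t·x⁻¹)⁻¹ - 1)/t dt. -/
open Real Set intervalIntegral

/-!
For `a > 0` put `ℓ(t) = 1 - t + t a`, which is positive on `[0, 1]`. Since `ℓ(t) - 1 = t (a - 1)`,
the integrand `(ℓ(t)⁻¹ - 1) / t` equals `(1 - a) / ℓ(t) = -ℓ'(t) / ℓ(t)` away from `t = 0`, so the
integral is `-log ℓ(1) + log ℓ(0) = -log a`. Take `a = x⁻¹`.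
-/

section

variable {a t : ℝ}

lemma one_sub_add_mul_pos (ha : 0 < a) (ht : t ∈ Icc (0 : ℝ) 1) : 0 < 1 - t + t * a := by
  obtain ⟨ht0, ht1⟩ := ht
  nlinarith [mul_nonneg ht0 ha.le]

lemma inv_one_sub_add_mul_sub_one_div (ht : t ≠ 0) (hℓ : 1 - t + t * a ≠ 0) :
    ((1 - t + t * a)⁻¹ - 1) / t = (1 - a) / (1 - t + t * a) := by
  field_simp
  ring

lemma hasDerivAt_neg_log_one_sub_add_mul (hℓ : 1 - t + t * a ≠ 0) :
    HasDerivAt (fun s => -log (1 - s + s * a)) ((1 - a) / (1 - t + t * a)) t := by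
  have hlin : HasDerivAt (fun s : ℝ => 1 - s + s * a) (a - 1) t := by
    exact (((hasDerivAt_id t).const_sub 1).add ((hasDerivAt_id t).mul_const a)).congr_deriv
      (by ring)
  exact (hlin.log hℓ).neg.congr_deriv (by ring)

lemma integral_one_sub_div_one_sub_add_mul (ha : 0 < a) :
    ∫ t in (0 : ℝ)..1, (1 - a) / (1 - t + t * a) = -log a := by
  have hpos : ∀ t ∈ uIcc (0 : ℝ) 1, 0 < 1 - t + t * a := fun t ht =>
    one_sub_add_mul_pos ha (by rwa [uIcc_of_le zero_le_one] at ht)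
  have hint : IntervalIntegrable (fun t => (1 - a) / (1 - t + t * a)) MeasureTheory.volume 0 1 :=
    (continuousOn_const.div (by fun_prop) fun t ht => (hpos t ht).ne').intervalIntegrable
  rw [integral_eq_sub_of_hasDerivAt
    (fun t ht => hasDerivAt_neg_log_one_sub_add_mul (hpos t ht).ne') hint]
  simp

lemma integral_inv_one_sub_add_mul_sub_one_div (ha : 0 < a) :
    ∫ t in (0 : ℝ)..1, ((1 - t + t * a)⁻¹ - 1) / t = -log a := by
  rw [← integral_one_sub_div_one_sub_add_mul ha]
  refine integral_congr_ae (MeasureTheory.ae_of_all _ fun t ht => ?_)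
  rw [uIoc_of_le zero_le_one] at ht
  exact inv_one_sub_add_mul_sub_one_div ht.1.ne'
    (one_sub_add_mul_pos ha (Ioc_subset_Icc_self ht)).ne'

end

theorem stmt_0 (x : ℝ) (hx : 0 < x) :
    Real.log x = ∫ t in (0:ℝ)..1, ((1 - t + t * x⁻¹)⁻¹ - 1) / t := by
  rw [integral_inv_one_sub_add_mul_sub_one_div (inv_pos.mpr hx), log_inv, neg_neg]
end

section
/- For every real number x > 0, -x·log x = ∫₀¹ (((1 - t)·x⁻¹ + t)⁻¹ - x)/t dt. -/
open Real Set

/- On (0, 1] the integrand equals -x · (x - 1) / (1 + t (x - 1)), and (x - 1) / (1 + t (x - 1)) is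
the derivative in t of log (1 + t (x - 1)), which runs from log 1 = 0 to log x. -/

lemma one_add_mul_sub_one_pos {x t : ℝ} (hx : 0 < x) (ht : t ∈ Icc (0 : ℝ) 1) :
    0 < 1 + t * (x - 1) := by
  rw [show 1 + t * (x - 1) = (1 - t) + t * x by ring]
  rcases ht.2.lt_or_eq with ht1 | rfl
  · exact add_pos_of_pos_of_nonneg (sub_pos.mpr ht1) (mul_nonneg ht.1 hx.le)
  · simpa using hx

lemma integral_mul_inv_one_add_mul {c : ℝ} (hc : ∀ t ∈ Icc (0 : ℝ) 1, 0 < 1 + t * c) :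
    ∫ t in (0 : ℝ)..1, c * (1 + t * c)⁻¹ = log (1 + c) := by
  have hderiv : ∀ t ∈ uIcc (0 : ℝ) 1,
      HasDerivAt (fun s => log (1 + s * c)) (c * (1 + t * c)⁻¹) t := by
    intro t ht
    rw [uIcc_of_le zero_le_one] at ht
    have hlin : HasDerivAt (fun s => 1 + s * c) c t := by
      simpa using ((hasDerivAt_id t).mul_const c).const_add 1
    simpa only [div_eq_mul_inv] using hlin.log (hc t ht).ne'
  have hcont : ContinuousOn (fun t => c * (1 + t * c)⁻¹) (uIcc (0 : ℝ) 1) := by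
    rw [uIcc_of_le zero_le_one]
    exact continuousOn_const.mul <| ContinuousOn.inv₀ (by fun_prop) fun t ht => (hc t ht).ne'
  rw [intervalIntegral.integral_eq_sub_of_hasDerivAt hderiv hcont.intervalIntegrable]
  simp

lemma inv_one_sub_mul_inv_add_sub_div_eq {x t : ℝ} (hx : 0 < x) (ht : t ∈ Ioc (0 : ℝ) 1) :
    (((1 - t) * x⁻¹ + t)⁻¹ - x) / t = -x * ((x - 1) * (1 + t * (x - 1))⁻¹) := by
  have hden := one_add_mul_sub_one_pos hx (Ioc_subset_Icc_self ht)
  have hrewrite : (1 - t) * x⁻¹ + t = (1 + t * (x - 1)) / x := by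
    field_simp
    ring
  rw [hrewrite, inv_div]
  field_simp [ht.1.ne']
  ring

theorem stmt_1 (x : ℝ) (hx : 0 < x) :
    -x * Real.log x = ∫ t in (0:ℝ)..1, (((1 - t) * x⁻¹ + t)⁻¹ - x) / t := by
  have hcongr : ∫ t in (0 : ℝ)..1, (((1 - t) * x⁻¹ + t)⁻¹ - x) / t
      = ∫ t in (0 : ℝ)..1, -x * ((x - 1) * (1 + t * (x - 1))⁻¹) := by
    refine intervalIntegral.integral_congr_ae (Filter.Eventually.of_forall fun t ht => ?_)
    rw [uIoc_of_le zero_le_one] at ht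
    exact inv_one_sub_mul_inv_add_sub_div_eq hx ht
  rw [hcongr, intervalIntegral.integral_const_mul,
    integral_mul_inv_one_add_mul fun t ht => one_add_mul_sub_one_pos hx ht]
  rw [add_sub_cancel]
end

section
/- Let α ≥ 0 and 0 < x ≤ δ ≤ 1 be real numbers. Then (x^(α+1)/(2δ) - x^(α-1)·δ/2 + x^α·ln δ) ≤ (x^(α+1/2)/√δ - x^(α-1/2)·√δ + x^α·ln δ) ≤ x^α·ln x ≤ (ln δ + 4 - 8√δ/(√x + √δ))·x^α ≤ (ln δ + 2(1 - 2δ/(x+δ)))·x^α. -/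
/-!
Put `s = √x / √δ ∈ (0, 1]`. After factoring out `x ^ α` and subtracting `log δ`, the chain
reads `(s² - s⁻²) / 2 ≤ s - s⁻¹ ≤ 2 log s ≤ 4 (s - 1) / (s + 1) ≤ 2 (s² - 1) / (s² + 1)`.
The two middle inequalities are the trapezoid and midpoint bounds for `∫_s^1 du / u`, proved by
monotonicity of the difference; the outer ones compare these bounds at `s` and at `s²`, and are
algebraic, with gaps of the sign of `(1 - s)³`.
-/

open Real Set

lemma antitoneOn_of_hasDerivAt_nonpos {D : Set ℝ} (hD : Convex ℝ D) (hDo : IsOpen D)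
    {f f' : ℝ → ℝ} (hf : ∀ t ∈ D, HasDerivAt f (f' t) t) (hf' : ∀ t ∈ D, f' t ≤ 0) :
    AntitoneOn f D := by
  refine antitoneOn_of_hasDerivWithinAt_nonpos (f' := f') hD
    (fun t ht ↦ (hf t ht).continuousAt.continuousWithinAt) ?_ ?_ <;> rw [hDo.interior_eq]
  · exact fun t ht ↦ (hf t ht).hasDerivWithinAt
  · exact hf'

namespace Real

lemma sub_inv_le_two_mul_log {s : ℝ} (hs : 0 < s) (hs1 : s ≤ 1) : s - s⁻¹ ≤ 2 * log s := by
  have hderiv : ∀ t ∈ Ioi (0 : ℝ), HasDerivAt (fun u ↦ 2 * log u - u + u⁻¹)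
      (-((t - 1) ^ 2 / t ^ 2)) t := fun t (ht : 0 < t) ↦
    (((hasDerivAt_log ht.ne').const_mul 2).sub (hasDerivAt_id t)).add (hasDerivAt_inv ht.ne')
      |>.congr_deriv (by field_simp; ring)
  have := antitoneOn_of_hasDerivAt_nonpos (convex_Ioi 0) isOpen_Ioi hderiv
    (fun t _ ↦ neg_nonpos.mpr (by positivity)) hs (mem_Ioi.mpr one_pos) hs1
  simp only [log_one, inv_one] at this
  linarith

lemma log_le_two_mul_sub_div_add {s : ℝ} (hs : 0 < s) (hs1 : s ≤ 1) :
    log s ≤ 2 * (s - 1) / (s + 1) := by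
  have hderiv : ∀ t ∈ Ioi (0 : ℝ), HasDerivAt (fun u ↦ 2 * (u - 1) / (u + 1) - log u)
      (-((t - 1) ^ 2 / (t * (t + 1) ^ 2))) t := fun t (ht : 0 < t) ↦
    ((((hasDerivAt_id t).sub_const 1).const_mul 2).div ((hasDerivAt_id t).add_const 1)
      (by positivity)).sub (hasDerivAt_log ht.ne')
      |>.congr_deriv (by simp only [id]; field_simp; ring)
  have := antitoneOn_of_hasDerivAt_nonpos (convex_Ioi 0) isOpen_Ioi hderiv
    (fun t (ht : 0 < t) ↦ neg_nonpos.mpr (by positivity)) hs (mem_Ioi.mpr one_pos) hs1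
  simp only [log_one, sub_self, mul_zero, zero_div] at this
  linarith

end Real

lemma sq_sub_inv_sq_le_two_mul_sub_inv {s : ℝ} (hs : 0 < s) (hs1 : s ≤ 1) :
    s ^ 2 - (s ^ 2)⁻¹ ≤ 2 * (s - s⁻¹) := by
  have key : 2 * (s - s⁻¹) - (s ^ 2 - (s ^ 2)⁻¹) = (1 - s) ^ 3 * (1 + s) / s ^ 2 := by
    field_simp; ring
  have : 0 ≤ (1 - s) ^ 3 * (1 + s) / s ^ 2 := by
    have : 0 ≤ 1 - s := by linarith
    positivity
  linarith

lemma two_mul_sub_div_add_le_sq {s : ℝ} (hs : -1 < s) (hs1 : s ≤ 1) :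
    2 * (2 * (s - 1) / (s + 1)) ≤ 2 * (s ^ 2 - 1) / (s ^ 2 + 1) := by
  have key : 2 * (s ^ 2 - 1) / (s ^ 2 + 1) - 2 * (2 * (s - 1) / (s + 1))
      = 2 * (1 - s) ^ 3 / ((s + 1) * (s ^ 2 + 1)) := by
    have : s + 1 ≠ 0 := by linarith
    field_simp; ring
  have : 0 ≤ 2 * (1 - s) ^ 3 / ((s + 1) * (s ^ 2 + 1)) := by
    have : 0 ≤ 1 - s := by linarith
    have : 0 < s + 1 := by linarith
    positivity
  linarith

lemma log_sub_log_chain {x δ : ℝ} (hx0 : 0 < x) (hx : x ≤ δ) :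
    x / δ - δ / x ≤ 2 * (√x / √δ - √δ / √x) ∧
      √x / √δ - √δ / √x ≤ log x - log δ ∧
      log x - log δ ≤ 4 - 8 * √δ / (√x + √δ) ∧
      4 - 8 * √δ / (√x + √δ) ≤ 2 * (1 - 2 * δ / (x + δ)) := by
  have hδ0 : 0 < δ := hx0.trans_le hx
  have hpx : 0 < √x := sqrt_pos.mpr hx0
  have hpδ : 0 < √δ := sqrt_pos.mpr hδ0
  set s := √x / √δ with hs_def
  have hs : 0 < s := by positivity
  have hs1 : s ≤ 1 := div_le_one_of_le₀ (sqrt_le_sqrt hx) hpδ.le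
  have hs_sq : s ^ 2 = x / δ := by rw [div_pow, sq_sqrt hx0.le, sq_sqrt hδ0.le]
  have hs_inv : s⁻¹ = √δ / √x := inv_div _ _
  have hs_log : 2 * log s = log x - log δ := by
    rw [log_div hpx.ne' hpδ.ne', log_sqrt hx0.le, log_sqrt hδ0.le]; ring
  have hs_mid : 2 * (2 * (s - 1) / (s + 1)) = 4 - 8 * √δ / (√x + √δ) := by
    rw [hs_def]; field_simp; ring
  have hs_top : 2 * (s ^ 2 - 1) / (s ^ 2 + 1) = 2 * (1 - 2 * δ / (x + δ)) := by
    rw [hs_sq]; field_simp; ring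
  refine ⟨?_, ?_, ?_, ?_⟩
  · simpa only [hs_sq, inv_div, hs_inv] using sq_sub_inv_sq_le_two_mul_sub_inv hs hs1
  · simpa only [hs_inv, hs_log] using sub_inv_le_two_mul_log hs hs1
  · rw [← hs_log, ← hs_mid]; linarith [log_le_two_mul_sub_div_add hs hs1]
  · simpa only [hs_mid, hs_top] using two_mul_sub_div_add_le_sq (by linarith) hs1

theorem stmt_7_general (x δ α : ℝ) (hx0 : 0 < x) (hx : x ≤ δ) :
    x ^ (α + 1) / (2 * δ) - x ^ (α - 1) * δ / 2 + x ^ α * Real.log δ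
        ≤ x ^ (α + 1 / 2) / Real.sqrt δ - x ^ (α - 1 / 2) * Real.sqrt δ + x ^ α * Real.log δ ∧
      x ^ (α + 1 / 2) / Real.sqrt δ - x ^ (α - 1 / 2) * Real.sqrt δ + x ^ α * Real.log δ
        ≤ x ^ α * Real.log x ∧
      x ^ α * Real.log x
        ≤ (Real.log δ + 4 - 8 * Real.sqrt δ / (Real.sqrt x + Real.sqrt δ)) * x ^ α ∧
      (Real.log δ + 4 - 8 * Real.sqrt δ / (Real.sqrt x + Real.sqrt δ)) * x ^ α
        ≤ (Real.log δ + 2 * (1 - 2 * δ / (x + δ))) * x ^ α := by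
  obtain ⟨h_sq_lower, h_lower, h_upper, h_sq_upper⟩ := log_sub_log_chain hx0 hx
  rw [rpow_add hx0, rpow_sub hx0, rpow_add hx0, rpow_sub hx0, rpow_one, ← sqrt_eq_rpow]
  refine ⟨?_, ?_, ?_, ?_⟩
  · linear_combination x ^ α / 2 * h_sq_lower
  · linear_combination x ^ α * h_lower
  · linear_combination x ^ α * h_upper
  · linear_combination x ^ α * h_sq_upper

theorem stmt_7 (x δ α : ℝ) (hα : 0 ≤ α) (hx0 : 0 < x) (hx : x ≤ δ) (hδ : δ ≤ 1) :
    x ^ (α + 1) / (2 * δ) - x ^ (α - 1) * δ / 2 + x ^ α * Real.log δ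
        ≤ x ^ (α + 1 / 2) / Real.sqrt δ - x ^ (α - 1 / 2) * Real.sqrt δ + x ^ α * Real.log δ ∧
      x ^ (α + 1 / 2) / Real.sqrt δ - x ^ (α - 1 / 2) * Real.sqrt δ + x ^ α * Real.log δ
        ≤ x ^ α * Real.log x ∧
      x ^ α * Real.log x
        ≤ (Real.log δ + 4 - 8 * Real.sqrt δ / (Real.sqrt x + Real.sqrt δ)) * x ^ α ∧
      (Real.log δ + 4 - 8 * Real.sqrt δ / (Real.sqrt x + Real.sqrt δ)) * x ^ α
        ≤ (Real.log δ + 2 * (1 - 2 * δ / (x + δ))) * x ^ α :=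
  stmt_7_general x δ α hx0 hx
end

section
/- Let α ≥ 0 and x ≥ δ ≥ 1 be real numbers. Then (4 - 8/(√x + 1))·x^α ≤ (ln δ + 4 - 8√δ/(√x + √δ))·x^α, and (x^(α+1/2)/√δ - x^(α-1/2)·√δ + x^α·ln δ) ≤ x^(α+1/2) - x^(α-1/2). -/
/-!
Write `s = √x` and `t = √δ`, so `1 ≤ t ≤ s` and `ln δ = 2 ln t`. Both inequalities reduce, after
dividing by `x ^ α`, to the classical bounds `2 (t - 1) / (t + 1) ≤ ln t ≤ (t - t⁻¹) / 2` for
`t ≥ 1` together with the sign of `(s - 1) (s - t)`.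
-/

open Real

namespace Real

/- With `y = (t - 1) / (t + 1)` one has `log t = log ((1 + y) / (1 - y)) = 2 artanh y`, so the two
bounds below are the first term of the artanh series and that term plus its geometric tail. -/
private lemma one_add_div_one_sub_sub_one_div_add_one {t : ℝ} (ht : 0 < t) :
    (1 + (t - 1) / (t + 1)) / (1 - (t - 1) / (t + 1)) = t := by
  field_simp
  ring

lemma two_mul_sub_one_div_add_one_le_log {t : ℝ} (ht : 1 ≤ t) :
    2 * (t - 1) / (t + 1) ≤ log t := by
  have h := sum_range_le_log_div (x := (t - 1) / (t + 1)) (by apply div_nonneg <;> linarith)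
    (by rw [div_lt_one (by linarith)]; linarith) 1
  rw [one_add_div_one_sub_sub_one_div_add_one (by linarith)] at h
  simp only [Finset.sum_range_one, mul_zero, zero_add, pow_one, Nat.cast_zero, div_one] at h
  rw [mul_div_assoc]
  linarith

lemma log_le_sub_inv_div_two {t : ℝ} (ht : 1 ≤ t) : log t ≤ (t - t⁻¹) / 2 := by
  have h := log_div_le_sum_range_add (x := (t - 1) / (t + 1)) (by apply div_nonneg <;> linarith)
    (by rw [div_lt_one (by linarith)]; linarith) 0
  rw [one_add_div_one_sub_sub_one_div_add_one (by linarith)] at h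
  have ht0 : 0 < t := by linarith
  have e : (t - 1) / (t + 1) / (1 - ((t - 1) / (t + 1)) ^ 2) = (t - t⁻¹) / 4 := by
    rw [show 1 - ((t - 1) / (t + 1)) ^ 2 = 4 * t / (t + 1) ^ 2 by field_simp; ring]
    field_simp
    ring
  simp only [Finset.range_zero, Finset.sum_empty, zero_add, mul_zero, pow_one, e] at h
  linarith

end Real

lemma eight_mul_div_add_sub_eight_div_add_one_le {s t : ℝ} (ht : 1 ≤ t) (hts : t ≤ s) :
    8 * t / (s + t) - 8 / (s + 1) ≤ 4 * (t - 1) / (t + 1) := by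
  have hs : 1 ≤ s := ht.trans hts
  have e : 8 * t / (s + t) - 8 / (s + 1) = 8 * s * (t - 1) / ((s + t) * (s + 1)) := by
    field_simp
    ring
  rw [e, div_le_div_iff₀ (by positivity) (by positivity)]
  -- `(s + t) (s + 1) - 2 s (t + 1) = (s - 1) (s - t)`
  nlinarith [mul_nonneg (mul_nonneg (sub_nonneg.2 ht) (sub_nonneg.2 hs)) (sub_nonneg.2 hts)]

lemma div_sub_div_add_sub_inv_le_sub_inv {s t : ℝ} (ht : 1 ≤ t) (hts : t ≤ s) :
    s / t - t / s + (t - t⁻¹) ≤ s - s⁻¹ := by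
  have hs : 1 ≤ s := ht.trans hts
  have e : s - s⁻¹ - (s / t - t / s + (t - t⁻¹)) = (t - 1) * (s - 1) * (s - t) / (t * s) := by
    field_simp
    ring
  rw [← sub_nonneg, e]
  have := mul_nonneg (mul_nonneg (sub_nonneg.2 ht) (sub_nonneg.2 hs)) (sub_nonneg.2 hts)
  positivity

theorem stmt_8_general (x δ α : ℝ) (hδ : 1 ≤ δ) (hx : δ ≤ x) :
    (4 - 8 / (Real.sqrt x + 1)) * x ^ α
        ≤ (Real.log δ + 4 - 8 * Real.sqrt δ / (Real.sqrt x + Real.sqrt δ)) * x ^ α ∧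
      x ^ (α + 1 / 2) / Real.sqrt δ - x ^ (α - 1 / 2) * Real.sqrt δ + x ^ α * Real.log δ
        ≤ x ^ (α + 1 / 2) - x ^ (α - 1 / 2) := by
  have hx0 : 0 < x := by linarith
  have ht : 1 ≤ √δ := one_le_sqrt.2 hδ
  have hts : √δ ≤ √x := sqrt_le_sqrt hx
  have hlog : log δ = 2 * log √δ := by rw [log_sqrt (by linarith)]; ring
  have hpow : 0 ≤ x ^ α := rpow_nonneg hx0.le α
  constructor
  · refine mul_le_mul_of_nonneg_right ?_ hpow
    have e : 4 * (√δ - 1) / (√δ + 1) = 2 * (2 * (√δ - 1) / (√δ + 1)) := by ring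
    linarith [eight_mul_div_add_sub_eight_div_add_one_le ht hts,
      two_mul_sub_one_div_add_one_le_log ht]
  · rw [rpow_add hx0, rpow_sub hx0, ← sqrt_eq_rpow]
    have key : √x / √δ - √δ / √x + log δ ≤ √x - (√x)⁻¹ := by
      linarith [div_sub_div_add_sub_inv_le_sub_inv ht hts, log_le_sub_inv_div_two ht]
    calc x ^ α * √x / √δ - x ^ α / √x * √δ + x ^ α * log δ
        = x ^ α * (√x / √δ - √δ / √x + log δ) := by ring
      _ ≤ x ^ α * (√x - (√x)⁻¹) := mul_le_mul_of_nonneg_left key hpow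
      _ = x ^ α * √x - x ^ α / √x := by ring

theorem stmt_8 (x δ α : ℝ) (hα : 0 ≤ α) (hδ : 1 ≤ δ) (hx : δ ≤ x) :
    (4 - 8 / (Real.sqrt x + 1)) * x ^ α
        ≤ (Real.log δ + 4 - 8 * Real.sqrt δ / (Real.sqrt x + Real.sqrt δ)) * x ^ α ∧
      x ^ (α + 1 / 2) / Real.sqrt δ - x ^ (α - 1 / 2) * Real.sqrt δ + x ^ α * Real.log δ
        ≤ x ^ (α + 1 / 2) - x ^ (α - 1 / 2) :=
  stmt_8_general x δ α hδ hx
end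

section
/- For every real λ with 0 < λ ≤ 1 and every real x ≥ 1, 1 - 1/x ≤ x^λ - x^(λ-1) ≤ (x^λ - 1)/λ ≤ (1/2)(x^λ - x^(λ-1) + x - 1) ≤ x - 1. -/
/-!
Put `f t = t ^ (l - 1)`, so that `(x ^ l - 1) / l = ∫ t in 1..x, f t` and
`x ^ l - x ^ (l - 1) = (x - 1) * f x`. Since `l ≤ 1`, `f` is antitone and convex on `[1, x]`,
so its integral lies between the lower rectangle `(x - 1) * f x` and the trapezoid
`(x - 1) * (f 1 + f x) / 2` (the upper Hermite–Hadamard bound), which in turn lies below the upper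
rectangle `(x - 1) * f 1 = x - 1`. The leftmost inequality is `f x ≥ x⁻¹`.
-/

open Real Set intervalIntegral

theorem Real.convexOn_rpow_of_nonpos {p : ℝ} (hp : p ≤ 0) :
    ConvexOn ℝ (Ioi 0) fun x : ℝ ↦ x ^ p := by
  refine ⟨convex_Ioi 0, fun x hx y hy a b ha hb hab ↦ ?_⟩
  have hlog := strictConcaveOn_log_Ioi.concaveOn.2 hx hy ha hb hab
  have hxy : 0 < a • x + b • y := convex_Ioi 0 hx hy ha hb hab
  simp only [smul_eq_mul] at hlog hxy ⊢
  rw [rpow_def_of_pos hx, rpow_def_of_pos hy, rpow_def_of_pos hxy]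
  calc exp (log (a * x + b * y) * p) ≤ exp (a * (log x * p) + b * (log y * p)) := by
        gcongr
        linarith [mul_le_mul_of_nonpos_right hlog hp]
    _ ≤ a * exp (log x * p) + b * exp (log y * p) := by
        simpa using convexOn_exp.2 (mem_univ _) (mem_univ _) ha hb hab

variable {f : ℝ → ℝ} {a b : ℝ}

theorem AntitoneOn.sub_mul_le_integral (hf : AntitoneOn f (Icc a b)) (hab : a ≤ b) :
    (b - a) * f b ≤ ∫ t in a..b, f t := by
  have hint : IntervalIntegrable f MeasureTheory.volume a b :=
    (uIcc_of_le hab ▸ hf).intervalIntegrable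
  simpa [mul_comm] using integral_mono_on hab intervalIntegrable_const hint
    fun t ht ↦ hf ht (right_mem_Icc.mpr hab) ht.2

theorem ConvexOn.integral_le_sub_mul_add_div_two (hf : ConvexOn ℝ (Icc a b) f)
    (hint : IntervalIntegrable f MeasureTheory.volume a b) (hab : a < b) :
    ∫ t in a..b, f t ≤ (b - a) * (f a + f b) / 2 := by
  set chord : ℝ → ℝ := fun t ↦ f a + (f b - f a) / (b - a) * (t - a)
  have hchord : Continuous chord := by fun_prop
  have hle : ∀ t ∈ Icc a b, f t ≤ chord t := by
    rintro t ⟨hat, htb⟩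
    have hba : 0 < b - a := sub_pos.mpr hab
    have key := hf.2 (left_mem_Icc.mpr hab.le) (right_mem_Icc.mpr hab.le)
      (div_nonneg (sub_nonneg.mpr htb) hba.le) (div_nonneg (sub_nonneg.mpr hat) hba.le)
      (by field_simp; ring)
    have ht : (b - t) / (b - a) * a + (t - a) / (b - a) * b = t := by field_simp; ring
    simp only [smul_eq_mul, ht] at key
    refine key.trans_eq ?_
    simp only [chord]
    field_simp
    ring
  calc ∫ t in a..b, f t ≤ ∫ t in a..b, chord t :=
        integral_mono_on hab.le hint (hchord.intervalIntegrable _ _) hle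
    _ = (b - a) * (f a + f b) / 2 := by
        simp only [chord]
        have hslope : Continuous fun t ↦ (f b - f a) / (b - a) * (t - a) := by fun_prop
        rw [integral_add intervalIntegrable_const (hslope.intervalIntegrable _ _),
          integral_const, integral_const_mul, integral_comp_sub_right fun t ↦ t, integral_id]
        field_simp [(sub_pos.mpr hab).ne']
        ring

theorem stmt_11 (l x : ℝ) (hl : 0 < l) (hl1 : l ≤ 1) (hx : 1 ≤ x) :
    1 - 1 / x ≤ x ^ l - x ^ (l - 1) ∧
      x ^ l - x ^ (l - 1) ≤ (x ^ l - 1) / l ∧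
      (x ^ l - 1) / l ≤ (1 / 2) * (x ^ l - x ^ (l - 1) + x - 1) ∧
      (1 / 2) * (x ^ l - x ^ (l - 1) + x - 1) ≤ x - 1 := by
  have hx0 : 0 < x := one_pos.trans_le hx
  have hIcc : Icc 1 x ⊆ Ioi 0 := fun t ht ↦ one_pos.trans_le ht.1
  have hanti : AntitoneOn (fun t : ℝ ↦ t ^ (l - 1)) (Icc 1 x) :=
    (antitoneOn_rpow_Ioi_of_exponent_nonpos (by linarith)).mono hIcc
  have hconv : ConvexOn ℝ (Icc 1 x) fun t : ℝ ↦ t ^ (l - 1) :=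
    (convexOn_rpow_of_nonpos (by linarith)).subset hIcc (convex_Icc 1 x)
  have hintegral : ∫ t in (1 : ℝ)..x, t ^ (l - 1) = (x ^ l - 1) / l := by
    rw [integral_rpow (Or.inl (by linarith)), sub_add_cancel, one_rpow]
  have hsplit : x ^ l - x ^ (l - 1) = (x - 1) * x ^ (l - 1) := by
    rw [rpow_sub_one hx0.ne']; field_simp
  have htop : x ^ (l - 1) ≤ 1 := rpow_le_one_of_one_le_of_nonpos hx (by linarith)
  refine ⟨?_, ?_, ?_, ?_⟩
  · have hbot : x⁻¹ ≤ x ^ (l - 1) := by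
      rw [← rpow_neg_one]
      exact rpow_le_rpow_of_exponent_le hx (by linarith)
    rw [hsplit, show 1 - 1 / x = (x - 1) * x⁻¹ by field_simp]
    exact mul_le_mul_of_nonneg_left hbot (sub_nonneg.mpr hx)
  · simpa [hsplit, hintegral] using hanti.sub_mul_le_integral hx
  · rcases hx.eq_or_lt with rfl | hx1
    · simp
    have := hconv.integral_le_sub_mul_add_div_two (uIcc_of_le hx ▸ hanti).intervalIntegrable hx1
    rw [hintegral, one_rpow] at this
    linarith
  · rw [hsplit]
    linarith [mul_le_mul_of_nonneg_left htop (sub_nonneg.mpr hx)]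
end

section
/- For every real λ with 0 < λ ≤ 1 and every real x with 0 < x ≤ 1, 1 - 1/x ≤ x^λ - x^(λ-1) ≤ (1/2)(x^λ - x^(λ-1) + x - 1) ≤ (x^λ - 1)/λ ≤ x - 1. -/
open Real Set

private lemma bern_aux {y p : ℝ} (hy : 0 ≤ y) (hp0 : 0 ≤ p) (hp1 : p ≤ 1) :
    y ^ p ≤ 1 + p * (y - 1) := by
  have h := rpow_one_add_le_one_add_mul_self (s := y - 1) (by linarith) hp0 hp1
  rw [show (1 : ℝ) + (y - 1) = y by ring] at h
  linarith

private lemma key3_aux (l x : ℝ) (hl : 0 < l) (hl1 : l ≤ 1) (hx0 : 0 < x) (hx : x ≤ 1) :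
    (1 / 2) * (x ^ l - x ^ (l - 1) + x - 1) ≤ (x ^ l - 1) / l := by
  set F : ℝ → ℝ := fun t => 2 * ((t ^ l - 1) / l) - (t ^ l - t ^ (l - 1) + t - 1) with hF
  have h2l : (2 : ℝ) - l ≠ 0 := by linarith
  have hd : ∀ t : ℝ, 0 < t →
      HasDerivAt F ((2 - l) * t ^ (l - 1) - (1 - l) * t ^ (l - 2) - 1) t := by
    intro t ht
    have h1 : HasDerivAt (fun s : ℝ => s ^ l) (l * t ^ (l - 1)) t :=
      Real.hasDerivAt_rpow_const (Or.inl ht.ne')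
    have h2 : HasDerivAt (fun s : ℝ => s ^ (l - 1)) ((l - 1) * t ^ (l - 1 - 1)) t :=
      Real.hasDerivAt_rpow_const (Or.inl ht.ne')
    have h3 : HasDerivAt F
        (2 * ((l * t ^ (l - 1)) / l) - ((l * t ^ (l - 1)) - ((l - 1) * t ^ (l - 1 - 1)) + 1)) t :=
      (((h1.sub_const 1).div_const l).const_mul 2).sub
        (((h1.sub h2).add (hasDerivAt_id t)).sub_const 1)
    convert h3 using 1
    rw [show l - 1 - 1 = l - 2 by ring]
    field_simp
    ring
  have hderiv_nonpos : ∀ t : ℝ, 0 < t → t ≤ 1 →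
      (2 - l) * t ^ (l - 1) - (1 - l) * t ^ (l - 2) - 1 ≤ 0 := by
    intro t ht ht1
    have hy : (0 : ℝ) ≤ t ^ (l - 2) := Real.rpow_nonneg ht.le _
    have hp0 : (0 : ℝ) ≤ (1 - l) / (2 - l) := div_nonneg (by linarith) (by linarith)
    have hp1 : (1 - l) / (2 - l) ≤ 1 := by
      rw [div_le_one (by linarith)]; linarith
    have hb := bern_aux hy hp0 hp1
    have hexp : (t ^ (l - 2)) ^ ((1 - l) / (2 - l)) = t ^ (l - 1) := by
      rw [← Real.rpow_mul ht.le]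
      congr 1
      field_simp
      ring
    rw [hexp] at hb
    have := mul_le_mul_of_nonneg_left hb (by linarith : (0 : ℝ) ≤ 2 - l)
    have heq : (2 - l) * (1 + (1 - l) / (2 - l) * (t ^ (l - 2) - 1)) =
        1 + (1 - l) * t ^ (l - 2) := by field_simp; ring
    rw [heq] at this
    linarith
  have hanti : AntitoneOn F (Icc x 1) := by
    apply antitoneOn_of_deriv_nonpos (convex_Icc x 1)
    · intro t ht
      exact (hd t (lt_of_lt_of_le hx0 ht.1)).continuousAt.continuousWithinAt
    · intro t ht
      rw [interior_Icc] at ht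
      exact ((hd t (lt_of_lt_of_le hx0 ht.1.le)).differentiableAt).differentiableWithinAt
    · intro t ht
      rw [interior_Icc] at ht
      have h0 : 0 < t := lt_of_lt_of_le hx0 ht.1.le
      rw [(hd t h0).deriv]
      exact hderiv_nonpos t h0 (le_of_lt ht.2)
  have hF1 : F 1 = 0 := by simp [hF]
  have hge : F 1 ≤ F x := hanti (left_mem_Icc.2 hx) (right_mem_Icc.2 hx) hx
  rw [hF1] at hge
  simp only [hF] at hge
  linarith

theorem stmt_12 (l x : ℝ) (hl : 0 < l) (hl1 : l ≤ 1) (hx0 : 0 < x) (hx : x ≤ 1) :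
    1 - 1 / x ≤ x ^ l - x ^ (l - 1) ∧
      x ^ l - x ^ (l - 1) ≤ (1 / 2) * (x ^ l - x ^ (l - 1) + x - 1) ∧
      (1 / 2) * (x ^ l - x ^ (l - 1) + x - 1) ≤ (x ^ l - 1) / l ∧
      (x ^ l - 1) / l ≤ x - 1 := by
  have heq : x ^ l = x ^ (l - 1) * x := by
    rw [← Real.rpow_add_one hx0.ne' (l - 1), sub_add_cancel]
  have hA : x ^ (l - 1) ≤ 1 / x := by
    have := Real.rpow_le_rpow_of_exponent_ge hx0 hx (by linarith : (-1 : ℝ) ≤ l - 1)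
    rwa [Real.rpow_neg_one, inv_eq_one_div] at this
  have hB : 1 ≤ x ^ (l - 1) := by
    have := Real.rpow_le_rpow_of_exponent_ge hx0 hx (by linarith : l - 1 ≤ (0 : ℝ))
    rwa [Real.rpow_zero] at this
  have hx1 : x - 1 ≤ 0 := by linarith
  refine ⟨?_, ?_, key3_aux l x hl hl1 hx0 hx, ?_⟩
  · have h := mul_le_mul_of_nonpos_right hA hx1
    have hxne : x ≠ 0 := hx0.ne'
    rw [heq]
    have : 1 / x * (x - 1) = 1 - 1 / x := by field_simp
    nlinarith
  · nlinarith [mul_le_mul_of_nonpos_right hB hx1]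
  · rw [div_le_iff₀ hl]
    have hb := bern_aux hx0.le hl.le hl1
    nlinarith
end

section
/- Let A and B be positive definite n×n complex matrices and define the relative operator entropy S(A|B) = A^(1/2) · log(A^(-1/2) B A^(-1/2)) · A^(1/2), where log is defined by functional calculus. Then S(A|B) = ∫₀¹ ((((1-t)A⁻¹ + t B⁻¹)⁻¹ - A)/t) dt. -/
/-!
Diagonalize `X = A^(-1/2) B A^(-1/2) = U D Uᴴ` and put `P = A^(1/2) U`. Then `A = P Pᴴ`,
`B = P D Pᴴ` and `S(A|B) = P (log D) Pᴴ`, while the weighted harmonic mean of `A` and `B` is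
`P ((1 - t) + t D⁻¹)⁻¹ Pᴴ`. Both sides are therefore `P (·) Pᴴ` applied to diagonal matrices,
and the theorem reduces to the scalar identity `∫₀¹ (d - 1) / ((1 - t) d + t) dt = log d`,
one eigenvalue `d` of `X` at a time.
-/

open Matrix
open scoped ComplexOrder

attribute [local instance] Matrix.frobeniusNormedAddCommGroup Matrix.frobeniusNormedSpace

/-- Matrix logarithm via the continuous functional calculus (spectral theorem). -/
noncomputable def mlog {n : Type*} [Fintype n] [DecidableEq n] (A : Matrix n n ℂ) :
    Matrix n n ℂ := cfc Real.log A

/-- Real power of a matrix via the continuous functional calculus (spectral theorem). -/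
noncomputable def mpow {n : Type*} [Fintype n] [DecidableEq n] (A : Matrix n n ℂ) (r : ℝ) :
    Matrix n n ℂ := cfc (fun x : ℝ => x ^ r) A

section Scalar

open Set

lemma one_sub_mul_add_mul_pos {a b t : ℝ} (ha : 0 < a) (hb : 0 < b) (ht : t ∈ Icc (0:ℝ) 1) :
    0 < (1 - t) * a + t * b := by
  rcases ht.1.eq_or_lt with rfl | ht₀
  · simpa using ha
  · nlinarith [mul_nonneg (sub_nonneg.2 ht.2) ha.le, mul_pos ht₀ hb]

variable {d : ℝ}

lemma one_sub_mul_add_pos (hd : 0 < d) {t : ℝ} (ht : t ∈ Icc (0:ℝ) 1) : 0 < (1 - t) * d + t := by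
  simpa using one_sub_mul_add_mul_pos hd one_pos ht

lemma continuousOn_sub_one_div_one_sub_mul_add (hd : 0 < d) :
    ContinuousOn (fun t => (d - 1) / ((1 - t) * d + t)) (uIcc 0 1) :=
  continuousOn_const.div (by fun_prop) fun t ht =>
    (one_sub_mul_add_pos hd (by rwa [uIcc_of_le zero_le_one] at ht)).ne'

lemma integral_sub_one_div_one_sub_mul_add (hd : 0 < d) :
    ∫ t in (0:ℝ)..1, (d - 1) / ((1 - t) * d + t) = Real.log d := by
  have hderiv : ∀ t ∈ uIcc (0:ℝ) 1,
      HasDerivAt (fun s => -Real.log ((1 - s) * d + s)) ((d - 1) / ((1 - t) * d + t)) t := by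
    intro t ht
    have hlin : HasDerivAt (fun s => (1 - s) * d + s) (1 - d) t :=
      ((((hasDerivAt_id t).const_sub 1).mul_const d).add (hasDerivAt_id t)).congr_deriv
        (by ring)
    have hpos := one_sub_mul_add_pos hd (by rwa [uIcc_of_le zero_le_one] at ht)
    exact (hlin.log hpos.ne').neg.congr_deriv (by ring)
  rw [intervalIntegral.integral_eq_sub_of_hasDerivAt hderiv
    (continuousOn_sub_one_div_one_sub_mul_add hd).intervalIntegrable]
  simp

/-- The integrand of the theorem for `A = 1` and `B = d`. -/
noncomputable def harmonicIntegrand (d t : ℝ) : ℝ := t⁻¹ * (((1 - t) + t * d⁻¹)⁻¹ - 1)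

lemma eqOn_harmonicIntegrand (hd : 0 < d) :
    EqOn (harmonicIntegrand d) (fun t => (d - 1) / ((1 - t) * d + t)) (uIoc 0 1) := by
  intro t ht
  rw [uIoc_of_le zero_le_one] at ht
  have := one_sub_mul_add_pos hd (Ioc_subset_Icc_self ht)
  have := ht.1.ne'
  rw [harmonicIntegrand]
  field_simp
  ring

lemma intervalIntegrable_harmonicIntegrand (hd : 0 < d) :
    IntervalIntegrable (harmonicIntegrand d) MeasureTheory.volume 0 1 :=
  (intervalIntegrable_congr (eqOn_harmonicIntegrand hd)).2
    (continuousOn_sub_one_div_one_sub_mul_add hd).intervalIntegrable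

lemma integral_harmonicIntegrand (hd : 0 < d) :
    ∫ t in (0:ℝ)..1, harmonicIntegrand d t = Real.log d :=
  (intervalIntegral.integral_congr_ae (MeasureTheory.ae_of_all _
    (eqOn_harmonicIntegrand hd))).trans (integral_sub_one_div_one_sub_mul_add hd)

end Scalar

section Matrices

variable {n : Type*} [Fintype n] [DecidableEq n]

section Field

variable {K : Type*} [Field K]

lemma inv_diagonal_of_ne_zero {c : n → K} (hc : ∀ i, c i ≠ 0) : (diagonal c)⁻¹ = diagonal c⁻¹ :=
  inv_eq_left_inv <| by
    rw [diagonal_mul_diagonal, ← diagonal_one]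
    exact congrArg diagonal (funext fun i => inv_mul_cancel₀ (hc i))

lemma inv_mul_diagonal_mul (X Y : Matrix n n K) {c : n → K} (hc : ∀ i, c i ≠ 0) :
    (X * diagonal c * Y)⁻¹ = Y⁻¹ * diagonal c⁻¹ * X⁻¹ := by
  rw [Matrix.mul_inv_rev, Matrix.mul_inv_rev, inv_diagonal_of_ne_zero hc, mul_assoc]

lemma inv_smul_inv_add_smul_inv_mul_diagonal_mul {R : Type*} [CommSemiring R] [Algebra R K]
    {P Q : Matrix n n K} (hP : IsUnit P.det) (hQ : IsUnit Q.det) {a b : n → K}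
    (ha : ∀ i, a i ≠ 0) (hb : ∀ i, b i ≠ 0) (s t : R)
    (hst : ∀ i, s • (a i)⁻¹ + t • (b i)⁻¹ ≠ 0) :
    (s • (P * diagonal a * Q)⁻¹ + t • (P * diagonal b * Q)⁻¹)⁻¹ =
      P * diagonal (fun i => (s • (a i)⁻¹ + t • (b i)⁻¹)⁻¹) * Q := by
  have hsum : s • (P * diagonal a * Q)⁻¹ + t • (P * diagonal b * Q)⁻¹ =
      Q⁻¹ * diagonal (fun i => s • (a i)⁻¹ + t • (b i)⁻¹) * P⁻¹ := by
    rw [inv_mul_diagonal_mul _ _ ha, inv_mul_diagonal_mul _ _ hb, ← smul_mul_assoc,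
      ← mul_smul_comm, ← diagonal_smul, ← smul_mul_assoc, ← mul_smul_comm, ← diagonal_smul,
      ← add_mul, ← mul_add, diagonal_add]
    rfl
  rw [hsum, inv_mul_diagonal_mul _ _ hst, nonsing_inv_nonsing_inv _ hP,
    nonsing_inv_nonsing_inv _ hQ]
  rfl

end Field

lemma mul_diagonal_ofReal_mul_eq_sum (P Q : Matrix n n ℂ) (v : n → ℝ) :
    P * diagonal (fun i => (v i : ℂ)) * Q = ∑ i, v i • (P * single i i 1 * Q) := by
  simp only [← sum_single_eq_diagonal, Finset.mul_sum, Finset.sum_mul]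
  refine Finset.sum_congr rfl fun i _ => ?_
  rw [← Complex.coe_smul, ← smul_mul_assoc, ← mul_smul_comm, smul_single, smul_eq_mul, mul_one]

lemma intervalIntegral_mul_diagonal_ofReal_mul (P Q : Matrix n n ℂ) {f : ℝ → n → ℝ} {a b : ℝ}
    (hf : ∀ i, IntervalIntegrable (fun t => f t i) MeasureTheory.volume a b) :
    ∫ t in a..b, P * diagonal (fun i => (f t i : ℂ)) * Q =
      P * diagonal (fun i => ((∫ t in a..b, f t i : ℝ) : ℂ)) * Q := by
  simp only [mul_diagonal_ofReal_mul_eq_sum]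
  rw [intervalIntegral.integral_finsetSum fun i _ => ⟨(hf i).1.smul_const _, (hf i).2.smul_const _⟩]
  simp only [intervalIntegral.integral_smul_const]

lemma inv_smul_harmonicMean_sub_mul_diagonal_mul {P Q : Matrix n n ℂ} (hP : IsUnit P.det)
    (hQ : IsUnit Q.det) {d : n → ℝ} (hd : ∀ i, 0 < d i) {t : ℝ} (ht : t ∈ Set.Icc (0:ℝ) 1) :
    t⁻¹ • (((1 - t) • (P * Q)⁻¹ + t • (P * diagonal (fun i => (d i : ℂ)) * Q)⁻¹)⁻¹ - P * Q) =
      P * diagonal (fun i => (harmonicIntegrand (d i) t : ℂ)) * Q := by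
  have hone : P * Q = P * diagonal (fun _ => (1 : ℂ)) * Q := by simp
  have hpos : ∀ i, 0 < (1 - t) + t * (d i)⁻¹ := fun i => by
    simpa using one_sub_mul_add_mul_pos one_pos (inv_pos.2 (hd i)) ht
  rw [hone, inv_smul_inv_add_smul_inv_mul_diagonal_mul hP hQ (fun _ => one_ne_zero)
    (fun i => Complex.ofReal_ne_zero.2 (hd i).ne') (1 - t) t ?_, ← sub_mul, ← mul_sub,
    diagonal_sub, ← smul_mul_assoc, ← mul_smul_comm, ← diagonal_smul]
  · refine congrArg (P * diagonal · * Q) (funext fun i => ?_)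
    simp [harmonicIntegrand]
  · intro i
    simp only [Complex.real_smul, inv_one, mul_one]
    exact_mod_cast (hpos i).ne'

lemma integral_inv_smul_harmonicMean_sub_mul_diagonal_mul {P Q : Matrix n n ℂ}
    (hP : IsUnit P.det) (hQ : IsUnit Q.det) {d : n → ℝ} (hd : ∀ i, 0 < d i) :
    ∫ t in (0:ℝ)..1,
        t⁻¹ • (((1 - t) • (P * Q)⁻¹ + t • (P * diagonal (fun i => (d i : ℂ)) * Q)⁻¹)⁻¹ - P * Q) =
      P * diagonal (fun i => (Real.log (d i) : ℂ)) * Q := by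
  rw [intervalIntegral.integral_congr fun t ht => inv_smul_harmonicMean_sub_mul_diagonal_mul hP hQ
      hd (by rwa [Set.uIcc_of_le zero_le_one] at ht),
    intervalIntegral_mul_diagonal_ofReal_mul P Q
      fun i => intervalIntegrable_harmonicIntegrand (hd i)]
  simp only [integral_harmonicIntegrand (hd _)]

lemma mpow_mul_mpow {A : Matrix n n ℂ} (hA : A.PosDef) (r s : ℝ) :
    mpow A r * mpow A s = mpow A (r + s) := by
  unfold mpow
  rw [← cfc_mul _ _ _ (A.finite_real_spectrum.continuousOn _)
    (A.finite_real_spectrum.continuousOn _)]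
  refine cfc_congr fun x hx => ?_
  rw [hA.1.spectrum_real_eq_range_eigenvalues] at hx
  obtain ⟨i, rfl⟩ := hx
  exact (Real.rpow_add (hA.eigenvalues_pos i) r s).symm

lemma mpow_zero {A : Matrix n n ℂ} (hA : A.IsHermitian) : mpow A 0 = 1 := by
  simpa [mpow] using cfc_const_one ℝ A hA.isSelfAdjoint

lemma mpow_one {A : Matrix n n ℂ} (hA : A.IsHermitian) : mpow A 1 = A := by
  simpa [mpow] using cfc_id' ℝ A hA.isSelfAdjoint

lemma isHermitian_mpow (A : Matrix n n ℂ) (r : ℝ) : (mpow A r).IsHermitian :=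
  cfc_predicate _ A

lemma Matrix.PosDef.exists_unitary_cfc_eq {X : Matrix n n ℂ} (hX : X.PosDef) :
    ∃ (U : Matrix n n ℂ) (d : n → ℝ), U * Uᴴ = 1 ∧ (∀ i, 0 < d i) ∧
      ∀ f : ℝ → ℝ, cfc f X = U * diagonal (fun i => (f (d i) : ℂ)) * Uᴴ :=
  ⟨hX.1.eigenvectorUnitary, hX.1.eigenvalues,
    Unitary.mul_star_self_of_mem hX.1.eigenvectorUnitary.2, hX.eigenvalues_pos,
    fun f => by rw [hX.1.cfc_eq, IsHermitian.cfc, Unitary.conjStarAlgAut_apply]; rfl⟩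

lemma Matrix.PosDef.exists_simultaneous_congr_diagonal {A B : Matrix n n ℂ} (hA : A.PosDef)
    (hB : B.PosDef) :
    ∃ (P : Matrix n n ℂ) (d : n → ℝ), IsUnit P.det ∧ (∀ i, 0 < d i) ∧ A = P * Pᴴ ∧
      B = P * diagonal (fun i => (d i : ℂ)) * Pᴴ ∧
      mpow A (1/2) * mlog (mpow A (-(1/2)) * B * mpow A (-(1/2))) * mpow A (1/2) =
        P * diagonal (fun i => (Real.log (d i) : ℂ)) * Pᴴ := by
  set S := mpow A (1/2)
  set T := mpow A (-(1/2))
  have hST : S * T = 1 := by rw [mpow_mul_mpow hA]; norm_num [mpow_zero hA.1]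
  have hTS : T * S = 1 := by rw [mpow_mul_mpow hA]; norm_num [mpow_zero hA.1]
  have hSS : S * S = A := by rw [mpow_mul_mpow hA]; norm_num [mpow_one hA.1]
  have hX : (T * B * T).PosDef := by
    have hT : IsUnit T := (isUnit_iff_isUnit_det T).2 (isUnit_det_of_right_inverse hTS)
    have := hB.conjTranspose_mul_mul_same (mulVec_injective_iff_isUnit.2 hT)
    rwa [(isHermitian_mpow A _).eq] at this
  obtain ⟨U, d, hU, hd, hcfc⟩ := hX.exists_unitary_cfc_eq
  have hUX : T * B * T = U * diagonal (fun i => (d i : ℂ)) * Uᴴ := by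
    simpa only [cfc_id' ℝ _ hX.1.isSelfAdjoint] using hcfc fun x => x
  have hPh : (S * U)ᴴ = Uᴴ * S := by rw [conjTranspose_mul, (isHermitian_mpow A _).eq]
  refine ⟨S * U, d, isUnit_det_of_right_inverse (B := Uᴴ * T) ?_, hd, ?_, ?_, ?_⟩
  · rw [mul_assoc, ← mul_assoc U, hU, one_mul, hST]
  · rw [hPh, mul_assoc, ← mul_assoc U, hU, one_mul, hSS]
  · have hB' : S * (T * B * T) * S = B := by
      simp only [← mul_assoc, hST, one_mul]
      rw [mul_assoc, hTS, mul_one]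
    rw [← hB', hUX, hPh]
    simp only [mul_assoc]
  · rw [hPh, mlog, hcfc]
    simp only [mul_assoc]

end Matrices

theorem stmt_13 {n : Type*} [Fintype n] [DecidableEq n]
    (A B : Matrix n n ℂ) (hA : A.PosDef) (hB : B.PosDef) :
    mpow A (1/2) * mlog (mpow A (-(1/2)) * B * mpow A (-(1/2))) * mpow A (1/2) =
      ∫ t in (0:ℝ)..1, t⁻¹ • (((1 - t) • A⁻¹ + t • B⁻¹)⁻¹ - A) := by
  obtain ⟨P, d, hP, hd, rfl, rfl, hS⟩ := hA.exists_simultaneous_congr_diagonal hB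
  have hPh : IsUnit Pᴴ.det := by rw [det_conjTranspose]; exact hP.star
  rw [hS, integral_inv_smul_harmonicMean_sub_mul_diagonal_mul hP hPh hd]
end

section
/- Let A and B be positive definite n×n complex matrices. With S(A|B) = A^(1/2) · log(A^(-1/2) B A^(-1/2)) · A^(1/2), we have S(A|B) = -B^(1/2) · [ (B^(-1/2) A B^(-1/2)) · log(B^(-1/2) A B^(-1/2)) ] · B^(1/2). -/
open Matrix
open scoped ComplexOrder

attribute [local instance] Matrix.frobeniusNormedAddCommGroup Matrix.frobeniusNormedSpace

/-! With `x = A^(1/2) B^(-1/2)` one has `x x* = (A^(-1/2) B A^(-1/2))⁻¹` and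
`x* x = B^(-1/2) A B^(-1/2)`, so the left-hand side is `-A^(1/2) log (x x*) A^(1/2)`.
Since the spectra are finite, `log` agrees on them with a polynomial, and
`x (x* x) = (x x*) x` gives `log (x x*) x = x log (x* x)`; writing `A^(1/2) = x B^(1/2)` on the
right moves the logarithm across and produces the right-hand side. -/

open Polynomial in
lemma SemiconjBy.aeval {R A : Type*} [CommSemiring R] [Semiring A] [Algebra R A] {x a b : A}
    (h : SemiconjBy x a b) (q : R[X]) : SemiconjBy x (aeval a q) (aeval b q) := by
  induction q using Polynomial.induction_on' with
  | add p q hp hq => simpa only [map_add] using hp.add_right hq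
  | monomial k c =>
    simpa only [aeval_monomial] using
      SemiconjBy.mul_right (Algebra.commute_algebraMap_right c x) (h.pow_right k)

section ContinuousFunctionalCalculus

variable {A : Type*} [Ring A] [StarRing A] [Algebra ℝ A] [TopologicalSpace A]
  [ContinuousFunctionalCalculus ℝ A IsSelfAdjoint]

lemma SemiconjBy.cfc_of_spectrum_finite {x a b : A} (h : SemiconjBy x a b) (f : ℝ → ℝ)
    (ha : IsSelfAdjoint a) (hb : IsSelfAdjoint b)
    (ha_fin : (spectrum ℝ a).Finite) (hb_fin : (spectrum ℝ b).Finite) :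
    SemiconjBy x (cfc f a) (cfc f b) := by
  classical
  set q := Lagrange.interpolate (ha_fin.union hb_fin).toFinset id f
  have hq : ∀ y ∈ spectrum ℝ a ∪ spectrum ℝ b, q.eval y = f y := fun y hy =>
    Lagrange.eval_interpolate_at_node (i := y) f (Set.injOn_id _) (by simpa using hy)
  rw [← cfc_congr fun y hy => hq y (.inl hy), ← cfc_congr fun y hy => hq y (.inr hy),
    cfc_polynomial q a, cfc_polynomial q b]
  exact h.aeval q

lemma cfc_log_inv [ContinuousMap.UniqueHom ℝ A] (a : Aˣ) (ha : IsSelfAdjoint (a : A)) :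
    cfc Real.log (↑a⁻¹ : A) = -cfc Real.log (a : A) := by
  have h0 : (0 : ℝ) ∉ spectrum ℝ (a : A) := spectrum.zero_notMem ℝ a.isUnit
  rw [← cfc_inv_id (R := ℝ) a, ← cfc_comp' Real.log (·⁻¹ : ℝ → ℝ) (a : A)
    (Real.continuousOn_log.mono fun y ⟨x, hx, hxy⟩ => by
      rw [← hxy]; exact inv_ne_zero (ne_of_mem_of_not_mem hx h0))
    ((continuousOn_inv₀ (G₀ := ℝ)).mono fun x hx => ne_of_mem_of_not_mem hx h0),
    ← cfc_neg]
  exact cfc_congr fun x _ => Real.log_inv x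

end ContinuousFunctionalCalculus

section Matrix

variable {n : Type*} [Fintype n] [DecidableEq n]

lemma cfc_mul_star_self_mul (f : ℝ → ℝ) (X : Matrix n n ℂ) :
    cfc f (X * star X) * X = X * cfc f (star X * X) :=
  ((SemiconjBy.cfc_of_spectrum_finite (by simp only [SemiconjBy, mul_assoc]) f
    (.star_mul_self X) (.mul_star_self X) finite_real_spectrum finite_real_spectrum)).eq.symm

lemma Matrix.PosDef.pos_of_mem_spectrum {A : Matrix n n ℂ} (hA : A.PosDef) {x : ℝ}
    (hx : x ∈ spectrum ℝ A) : 0 < x := by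
  rw [hA.isHermitian.spectrum_real_eq_range_eigenvalues] at hx
  obtain ⟨i, rfl⟩ := hx
  exact hA.eigenvalues_pos i

lemma isSelfAdjoint_mpow (A : Matrix n n ℂ) (r : ℝ) : IsSelfAdjoint (mpow A r) :=
  cfc_predicate _ A

lemma mpow_add {A : Matrix n n ℂ} (hA : A.PosDef) (r s : ℝ) :
    mpow A (r + s) = mpow A r * mpow A s := by
  rw [mpow, mpow, mpow, ← cfc_mul _ _ A (finite_real_spectrum.continuousOn _)
    (finite_real_spectrum.continuousOn _)]
  exact cfc_congr fun x hx => Real.rpow_add (hA.pos_of_mem_spectrum hx) r s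

lemma mpow_half_mul_mpow_half {A : Matrix n n ℂ} (hA : A.PosDef) :
    mpow A (1/2) * mpow A (1/2) = A := by
  rw [← mpow_add hA, add_halves, mpow_one hA.isHermitian]

lemma mpow_mul_mpow_neg {A : Matrix n n ℂ} (hA : A.PosDef) (r : ℝ) :
    mpow A r * mpow A (-r) = 1 := by
  rw [← mpow_add hA, add_neg_cancel, mpow_zero hA.isHermitian]

lemma mpow_neg {A : Matrix n n ℂ} (hA : A.PosDef) (r : ℝ) : mpow A (-r) = (mpow A r)⁻¹ :=
  (inv_eq_right_inv (mpow_mul_mpow_neg hA r)).symm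

lemma isUnit_mpow {A : Matrix n n ℂ} (hA : A.PosDef) (r : ℝ) : IsUnit (mpow A r) :=
  .of_mul_eq_one _ (mpow_mul_mpow_neg hA r)

lemma mul_mlog_conj_mul_eq_neg {a b : Matrix n n ℂ} (ha : IsSelfAdjoint a) (hb : IsSelfAdjoint b)
    (ha_unit : IsUnit a) (hb_unit : IsUnit b) :
    a * mlog (a⁻¹ * (b * b) * a⁻¹) * a =
      -(b * ((b⁻¹ * (a * a) * b⁻¹) * mlog (b⁻¹ * (a * a) * b⁻¹)) * b) := by
  lift a to (Matrix n n ℂ)ˣ using ha_unit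
  lift b to (Matrix n n ℂ)ˣ using hb_unit
  set x : (Matrix n n ℂ)ˣ := a * b⁻¹
  set c : (Matrix n n ℂ)ˣ := b⁻¹ * (a * a) * b⁻¹
  have hx_star : star (x : Matrix n n ℂ) = ↑(b⁻¹ * a) := by
    have hb_star : star b = b := Units.ext (by rw [Units.coe_star, hb.star_eq])
    rw [Units.val_mul, star_mul, ha.star_eq, ← Units.coe_star_inv, hb_star, Units.val_mul]
  have hxc : b⁻¹ * a * x = c := by simp only [x, c]; group
  have hinv : (x * (b⁻¹ * a))⁻¹ = a⁻¹ * (b * b) * a⁻¹ := by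
    simp only [x, _root_.mul_inv_rev, inv_inv, mul_assoc]
  have hxb : x * b = a := by simp only [x]; group
  have hax : a * x = b * c := by simp only [x, c]; group
  have hsemi := cfc_mul_star_self_mul Real.log (x : Matrix n n ℂ)
  rw [hx_star, ← Units.val_mul, ← Units.val_mul, hxc] at hsemi
  have hlog := cfc_log_inv (x * (b⁻¹ * a))
    (by rw [Units.val_mul, ← hx_star]; exact .mul_star_self _)
  rw [hinv] at hlog
  simp only [mlog, ← coe_units_inv, ← Units.val_mul]
  calc (a : Matrix n n ℂ) * cfc Real.log ↑(a⁻¹ * (b * b) * a⁻¹) * ↑a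
      = -(↑a * (cfc Real.log ↑(x * (b⁻¹ * a)) * ↑x) * ↑b) := by
        rw [hlog, mul_assoc _ (cfc _ _ * _), mul_assoc (cfc _ _), ← Units.val_mul, hxb]
        simp only [mul_neg, neg_mul, mul_assoc]
    _ = -(↑a * (↑x * cfc Real.log ↑c) * ↑b) := by rw [hsemi]
    _ = -(↑b * (↑c * cfc Real.log ↑c) * ↑b) := by
        rw [← mul_assoc (a : Matrix n n ℂ), ← Units.val_mul, hax, Units.val_mul,
          mul_assoc (b : Matrix n n ℂ)]

end Matrix

theorem stmt_14 {n : Type*} [Fintype n] [DecidableEq n]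
    (A B : Matrix n n ℂ) (hA : A.PosDef) (hB : B.PosDef) :
    mpow A (1/2) * mlog (mpow A (-(1/2)) * B * mpow A (-(1/2))) * mpow A (1/2) =
      -(mpow B (1/2) *
        ((mpow B (-(1/2)) * A * mpow B (-(1/2))) *
          mlog (mpow B (-(1/2)) * A * mpow B (-(1/2)))) * mpow B (1/2)) := by
  rw [mpow_neg hA, mpow_neg hB]
  conv_lhs => rw [← mpow_half_mul_mpow_half hB]
  conv_rhs => rw [← mpow_half_mul_mpow_half hA]
  exact mul_mlog_conj_mul_eq_neg (isSelfAdjoint_mpow A _) (isSelfAdjoint_mpow B _)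
    (isUnit_mpow hA _) (isUnit_mpow hB _)
end

section
/- Let A, B, C be positive definite n×n complex matrices with B ≤ C in the Loewner order, where S(A|X) = A^(1/2) · log(A^(-1/2) X A^(-1/2)) · A^(1/2). Then S(A|B) ≤ S(A|C). -/
open Matrix
open scoped ComplexOrder

attribute [local instance] Matrix.frobeniusNormedAddCommGroup Matrix.frobeniusNormedSpace

/-! Conjugation by a self-adjoint element preserves the Loewner order and the logarithm is
operator monotone (`CFC.log_le_log`), so `b ↦ a^{1/2} log (a^{-1/2} b a^{-1/2}) a^{1/2}` is
monotone on the strictly positive elements of any unital C⋆-algebra. Complex matrices with the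
L2 operator norm form such an algebra, in which `mpow` and `mlog` are its `rpow` and `log`. -/

section RelativeOperatorEntropy

open CFC

variable {A : Type*} [CStarAlgebra A] [PartialOrder A] [StarOrderedRing A]

noncomputable def relOperatorEntropy (a b : A) : A :=
  a ^ (1 / 2 : ℝ) * log (a ^ (-(1 / 2) : ℝ) * b * a ^ (-(1 / 2) : ℝ)) * a ^ (1 / 2 : ℝ)

lemma relOperatorEntropy_le_relOperatorEntropy {a b c : A} (hbc : b ≤ c)
    (ha : IsStrictlyPositive a) (hb : IsStrictlyPositive b) :
    relOperatorEntropy a b ≤ relOperatorEntropy a c := by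
  have hq : IsStrictlyPositive (a ^ (-(1 / 2) : ℝ)) := IsStrictlyPositive.rpow a _ ha
  have hqbq : IsStrictlyPositive (a ^ (-(1 / 2) : ℝ) * b * a ^ (-(1 / 2) : ℝ)) :=
    (IsUnit.isStrictlyPositive_iff_conjugate_of_isSelfAdjoint b _ hq.isUnit hq.isSelfAdjoint).2 hb
  exact (IsStrictlyPositive.rpow a (1 / 2) ha).isSelfAdjoint.conjugate_le_conjugate
    (log_le_log (hq.isSelfAdjoint.conjugate_le_conjugate hbc) hqbq)

end RelativeOperatorEntropy

open scoped MatrixOrder Matrix.Norms.L2Operator in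
lemma Matrix.PosDef.relOperatorEntropy_eq {n : Type*} [Fintype n] [DecidableEq n]
    {A : Matrix n n ℂ} (hA : A.PosDef) (X : Matrix n n ℂ) :
    relOperatorEntropy A X =
      mpow A (1/2) * mlog (mpow A (-(1/2)) * X * mpow A (-(1/2))) * mpow A (1/2) := by
  simp only [relOperatorEntropy, mpow, mlog, CFC.rpow_eq_cfc_real hA.posSemidef.nonneg]
  rfl

theorem stmt_15_general {n : Type*} [Fintype n] [DecidableEq n]
    (A B C : Matrix n n ℂ) (hA : A.PosDef) (hB : B.PosDef)
    (hBC : (C - B).PosSemidef) :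
    ((mpow A (1/2) * mlog (mpow A (-(1/2)) * C * mpow A (-(1/2))) * mpow A (1/2)) -
      (mpow A (1/2) * mlog (mpow A (-(1/2)) * B * mpow A (-(1/2))) * mpow A (1/2))).PosSemidef := by
  open scoped MatrixOrder Matrix.Norms.L2Operator in
  simpa only [hA.relOperatorEntropy_eq, Matrix.le_iff] using
    relOperatorEntropy_le_relOperatorEntropy (Matrix.le_iff.2 hBC) hA.isStrictlyPositive
      hB.isStrictlyPositive

theorem stmt_15 {n : Type*} [Fintype n] [DecidableEq n]
    (A B C : Matrix n n ℂ) (hA : A.PosDef) (hB : B.PosDef) (hC : C.PosDef)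
    (hBC : (C - B).PosSemidef) :
    ((mpow A (1/2) * mlog (mpow A (-(1/2)) * C * mpow A (-(1/2))) * mpow A (1/2)) -
      (mpow A (1/2) * mlog (mpow A (-(1/2)) * B * mpow A (-(1/2))) * mpow A (1/2))).PosSemidef :=
  stmt_15_general A B C hA hB hBC
end

section
/- Let A, B be positive definite n×n complex matrices, let C be an invertible self-adjoint n×n matrix, and let S(X|Y) = X^(1/2) · log(X^(-1/2) Y X^(-1/2)) · X^(1/2). Then S(CAC | CBC) = C · S(A|B) · C. -/
open Matrix
open scoped ComplexOrder

attribute [local instance] Matrix.frobeniusNormedAddCommGroup Matrix.frobeniusNormedSpace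

/-
Put `P = C A C` and `U = A^{1/2} C P^{-1/2}`. Then `U* U = P^{-1/2} P P^{-1/2} = 1`, so the
invertible `U` is unitary, and `P^{-1/2} (C B C) P^{-1/2} = U* (A^{-1/2} B A^{-1/2}) U`.
The continuous functional calculus commutes with unitary conjugation, so the logarithm of the
latter is `U* log(A^{-1/2} B A^{-1/2}) U`; sandwiching with `P^{1/2}` and using
`P^{1/2} U* = C A^{1/2}` gives `C S(A|B) C`.
-/

section UnitaryConjugation

variable {A : Type*} [Ring A] [StarRing A] [TopologicalSpace A] [IsSemitopologicalRing A]
  [Algebra ℝ A] [ContinuousFunctionalCalculus ℝ A IsSelfAdjoint] [ContinuousMap.UniqueHom ℝ A]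

theorem cfc_star_mul_mul_of_mem_unitary (f : ℝ → ℝ) (a : A) {u : A} (hu : u ∈ unitary A) :
    cfc f (star u * a * u) = star u * cfc f a * u := by
  -- Off the domain of the calculus both sides are the junk value `0`.
  by_cases ha : IsSelfAdjoint a
  swap
  · have hua : ¬IsSelfAdjoint (star u * a * u) := fun h => ha <| by
      have hconj := h.conjugate u
      rwa [← mul_assoc, ← mul_assoc, Unitary.mul_star_self_of_mem hu, one_mul, mul_assoc,
        Unitary.mul_star_self_of_mem hu, mul_one] at hconj
    simp [cfc_apply_of_not_predicate, ha, hua]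
  by_cases hf : ContinuousOn f (spectrum ℝ a)
  · exact (StarAlgHom.map_cfc ((Unitary.conjStarAlgAut ℝ A ⟨u, hu⟩).symm : A →⋆ₐ[ℝ] A) f a hf
      (show Continuous fun x => star u * x * u by fun_prop)).symm
  · have hf' : ¬ContinuousOn f (spectrum ℝ (star u * a * u)) := by
      rwa [Unitary.spectrum_star_left_conjugate (U := ⟨u, hu⟩)]
    simp [cfc_apply_of_not_continuousOn, hf, hf']

end UnitaryConjugation

namespace CFC

variable {A : Type*} [PartialOrder A] [Ring A] [StarRing A] [TopologicalSpace A]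
  [StarOrderedRing A] [Algebra ℝ A] [ContinuousFunctionalCalculus ℝ A IsSelfAdjoint]
  [NonnegSpectrumClass ℝ A]

noncomputable def relativeOperatorEntropy (a b : A) : A :=
  a ^ (1/2 : ℝ) * cfc Real.log (a ^ (-(1/2) : ℝ) * b * a ^ (-(1/2) : ℝ)) * a ^ (1/2 : ℝ)

lemma star_rpow (a : A) (x : ℝ) : star (a ^ x) = a ^ x :=
  (IsSelfAdjoint.of_nonneg rpow_nonneg).star_eq

lemma rpow_half_mul_rpow_half {a : A} (ha : IsStrictlyPositive a) :
    a ^ (1/2 : ℝ) * a ^ (1/2 : ℝ) = a := by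
  rw [← rpow_add ha.isUnit, add_halves, rpow_one a]

lemma rpow_neg_half_mul_mul_rpow_neg_half {a : A} (ha : IsStrictlyPositive a) :
    a ^ (-(1/2) : ℝ) * a * a ^ (-(1/2) : ℝ) = 1 := by
  nth_rw 2 [← rpow_half_mul_rpow_half ha]
  rw [← mul_assoc, rpow_neg_mul_rpow _ ha, one_mul, rpow_mul_rpow_neg _ ha]

theorem mem_unitary_rpow_half_mul_mul_rpow_neg_half {a c : A} (ha : IsStrictlyPositive a)
    (hc : IsUnit c) :
    a ^ (1/2 : ℝ) * c * (star c * a * c) ^ (-(1/2) : ℝ) ∈ unitary A := by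
  have hp : IsStrictlyPositive (star c * a * c) :=
    hc.isStrictlyPositive_star_left_conjugate_iff.mpr ha
  have hunit : IsUnit (a ^ (1/2 : ℝ) * c * (star c * a * c) ^ (-(1/2) : ℝ)) :=
    ((ha.isUnit.cfcRpow _).mul hc).mul (hp.isUnit.cfcRpow _)
  refine hunit.mem_unitary_of_star_mul_self ?_
  calc _ = (star c * a * c) ^ (-(1/2) : ℝ) * (star c * (a ^ (1/2 : ℝ) * a ^ (1/2 : ℝ)) * c) *
        (star c * a * c) ^ (-(1/2) : ℝ) := by
        simp only [star_mul, star_rpow, mul_assoc]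
    _ = 1 := by rw [rpow_half_mul_rpow_half ha, rpow_neg_half_mul_mul_rpow_neg_half hp]

variable [IsSemitopologicalRing A] [ContinuousMap.UniqueHom ℝ A]

theorem relativeOperatorEntropy_star_mul_mul {a c : A} (ha : IsStrictlyPositive a)
    (hc : IsUnit c) (b : A) :
    relativeOperatorEntropy (star c * a * c) (star c * b * c) =
      star c * relativeOperatorEntropy a b * c := by
  have hp : IsStrictlyPositive (star c * a * c) :=
    hc.isStrictlyPositive_star_left_conjugate_iff.mpr ha
  set p := star c * a * c
  set u := a ^ (1/2 : ℝ) * c * p ^ (-(1/2) : ℝ)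
  have hu : u ∈ unitary A := mem_unitary_rpow_half_mul_mul_rpow_neg_half ha hc
  have hstar_u : star u = p ^ (-(1/2) : ℝ) * star c * a ^ (1/2 : ℝ) := by
    simp only [u, star_mul, star_rpow, mul_assoc]
  have hconj : p ^ (-(1/2) : ℝ) * (star c * b * c) * p ^ (-(1/2) : ℝ) =
      star u * (a ^ (-(1/2) : ℝ) * b * a ^ (-(1/2) : ℝ)) * u := by
    have hcancel : ∀ x : A, a ^ (1/2 : ℝ) * (a ^ (-(1/2) : ℝ) * x) = x := fun x => by
      rw [← mul_assoc, rpow_mul_rpow_neg _ ha, one_mul]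
    have hcancel' : ∀ x : A, a ^ (-(1/2) : ℝ) * (a ^ (1/2 : ℝ) * x) = x := fun x => by
      rw [← mul_assoc, rpow_neg_mul_rpow _ ha, one_mul]
    rw [hstar_u]
    simp only [u, mul_assoc, hcancel, hcancel']
  have hright : u * p ^ (1/2 : ℝ) = a ^ (1/2 : ℝ) * c := by
    rw [mul_assoc, rpow_neg_mul_rpow _ hp, mul_one]
  have hleft : p ^ (1/2 : ℝ) * star u = star c * a ^ (1/2 : ℝ) := by
    rw [hstar_u, ← mul_assoc, ← mul_assoc, rpow_mul_rpow_neg _ hp, one_mul]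
  calc relativeOperatorEntropy p (star c * b * c)
      = p ^ (1/2 : ℝ) * (star u * cfc Real.log (a ^ (-(1/2) : ℝ) * b * a ^ (-(1/2) : ℝ)) * u) *
          p ^ (1/2 : ℝ) := by
        rw [relativeOperatorEntropy, hconj, cfc_star_mul_mul_of_mem_unitary _ _ hu]
    _ = star c * relativeOperatorEntropy a b * c := by
        simp only [relativeOperatorEntropy, mul_assoc, ← hright]
        simp only [← mul_assoc, hleft]

end CFC

open scoped MatrixOrder

lemma mpow_eq_rpow {n : Type*} [Fintype n] [DecidableEq n] {A : Matrix n n ℂ} (hA : 0 ≤ A)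
    (r : ℝ) : mpow A r = A ^ r :=
  (CFC.rpow_eq_cfc_real hA).symm

theorem stmt_16_general {n : Type*} [Fintype n] [DecidableEq n]
    (A B C : Matrix n n ℂ) (hA : A.PosDef)
    (hC : IsUnit C) (hCsa : C.IsHermitian) :
    mpow (C * A * C) (1/2) *
        mlog (mpow (C * A * C) (-(1/2)) * (C * B * C) * mpow (C * A * C) (-(1/2))) *
        mpow (C * A * C) (1/2) =
      C * (mpow A (1/2) * mlog (mpow A (-(1/2)) * B * mpow A (-(1/2))) * mpow A (1/2)) * C := by
  have hA₀ : 0 ≤ A := hA.posSemidef.nonneg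
  have hCAC₀ : 0 ≤ C * A * C := IsSelfAdjoint.conjugate_nonneg hA₀ hCsa
  simp only [mpow_eq_rpow hA₀, mpow_eq_rpow hCAC₀]
  have h := CFC.relativeOperatorEntropy_star_mul_mul hA.isStrictlyPositive hC B
  rwa [show star C = C from hCsa] at h

theorem stmt_16 {n : Type*} [Fintype n] [DecidableEq n]
    (A B C : Matrix n n ℂ) (hA : A.PosDef) (hB : B.PosDef)
    (hC : IsUnit C) (hCsa : C.IsHermitian) :
    mpow (C * A * C) (1/2) *
        mlog (mpow (C * A * C) (-(1/2)) * (C * B * C) * mpow (C * A * C) (-(1/2))) *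
        mpow (C * A * C) (1/2) =
      C * (mpow A (1/2) * mlog (mpow A (-(1/2)) * B * mpow A (-(1/2))) * mpow A (1/2)) * C :=
  stmt_16_general A B C hA hC hCsa
end

section
/- Let A, B be positive definite n×n complex matrices with A ≤ B in the Loewner order, and let A #_{1/2} B = A^(1/2)(A^(-1/2) B A^(-1/2))^(1/2) A^(1/2), A #_{-1/2} B = A^(1/2)(A^(-1/2) B A^(-1/2))^(-1/2) A^(1/2), and S(A|B) = A^(1/2) log(A^(-1/2) B A^(-1/2)) A^(1/2). Then A - A B⁻¹ A ≤ 2(A - 2 A (A+B)⁻¹ A) ≤ S(A|B) ≤ A #_{1/2} B - A #_{-1/2} B ≤ (1/2)(B - A B⁻¹ A) ≤ B - A. -/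
/-!
Write `C = A^{-1/2} B A^{-1/2}` and `P(f) = A^{1/2} f(C) A^{1/2}`. Every matrix in the chain is
such a perspective: `P(1) = A`, `P(id) = B` and `P(1/g) = A P(g)⁻¹ A`, so `A B⁻¹ A = P(x⁻¹)` and
`A (A + B)⁻¹ A = P((1 + x)⁻¹)`. Congruence by `A^{-1/2}` turns `A ≤ B` into `1 ≤ C`, so the
spectrum of `C` lies in `[1, ∞)`, where the scalar chain
`1 - 1/x ≤ 2(1 - 2/(1 + x)) ≤ log x ≤ √x - 1/√x ≤ (x - 1/x)/2 ≤ x - 1` holds. The functional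
calculus is monotone and congruence by `A^{1/2}` preserves the Loewner order.
-/
open Matrix
open scoped ComplexOrder

attribute [local instance] Matrix.frobeniusNormedAddCommGroup Matrix.frobeniusNormedSpace

lemma monotoneOn_Ici_of_hasDerivAt {f f' : ℝ → ℝ} {a : ℝ}
    (hf : ∀ x, a ≤ x → HasDerivAt f (f' x) x) (hf' : ∀ x, a < x → 0 ≤ f' x) :
    MonotoneOn f (Set.Ici a) :=
  monotoneOn_of_hasDerivWithinAt_nonneg (convex_Ici a)
    (fun x hx ↦ (hf x hx).continuousAt.continuousWithinAt)
    (fun x hx ↦ (hf x (interior_subset hx)).hasDerivWithinAt)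
    (fun x hx ↦ hf' x (by rwa [interior_Ici] at hx))

namespace Real

variable {x : ℝ}

lemma one_sub_inv_le_two_mul_one_sub_two_mul_inv_one_add (hx : 1 ≤ x) :
    1 - x⁻¹ ≤ 2 * (1 - 2 * (1 + x)⁻¹) := by
  have hx0 : 0 < x := by linarith
  rw [← sub_nonneg]
  have key : 2 * (1 - 2 * (1 + x)⁻¹) - (1 - x⁻¹) = (x - 1) ^ 2 / (x * (1 + x)) := by
    field_simp; ring
  rw [key]; positivity

lemma two_mul_one_sub_two_mul_inv_one_add_le_log (hx : 1 ≤ x) :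
    2 * (1 - 2 * (1 + x)⁻¹) ≤ log x := by
  have hderiv : ∀ y : ℝ, 1 ≤ y →
      HasDerivAt (fun t ↦ log t + 4 * (1 + t)⁻¹) (y⁻¹ - 4 * ((1 + y) ^ 2)⁻¹) y := by
    intro y hy
    have hinv := ((hasDerivAt_id' y).const_add 1).inv (by linarith)
    exact ((hasDerivAt_log (by linarith)).add (hinv.const_mul 4)).congr_deriv (by ring)
  have hmono := monotoneOn_Ici_of_hasDerivAt hderiv fun y hy ↦ by
    have hy0 : 0 < y := by linarith
    have key : y⁻¹ - 4 * ((1 + y) ^ 2)⁻¹ = (y - 1) ^ 2 / (y * (1 + y) ^ 2) := by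
      field_simp; ring
    rw [key]; positivity
  have := hmono Set.self_mem_Ici hx hx
  norm_num at this
  linarith

lemma two_mul_log_le_sub_inv (hx : 1 ≤ x) : 2 * log x ≤ x - x⁻¹ := by
  have hderiv : ∀ y : ℝ, 1 ≤ y →
      HasDerivAt (fun t ↦ t - t⁻¹ - 2 * log t) (1 + (y ^ 2)⁻¹ - 2 * y⁻¹) y := by
    intro y hy
    exact (((hasDerivAt_id' y).sub ((hasDerivAt_id' y).inv (by linarith))).sub
      ((hasDerivAt_log (by linarith)).const_mul 2)).congr_deriv (by ring)
  have hmono := monotoneOn_Ici_of_hasDerivAt hderiv fun y hy ↦ by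
    have hy0 : 0 < y := by linarith
    have key : 1 + (y ^ 2)⁻¹ - 2 * y⁻¹ = (y - 1) ^ 2 / y ^ 2 := by
      field_simp; ring
    rw [key]; positivity
  have := hmono Set.self_mem_Ici hx hx
  norm_num at this
  linarith

lemma log_le_rpow_half_sub_rpow_neg_half (hx : 1 ≤ x) :
    log x ≤ x ^ (1 / 2 : ℝ) - x ^ (-(1 / 2) : ℝ) := by
  have hx0 : 0 ≤ x := by linarith
  rw [rpow_neg hx0, ← sqrt_eq_rpow, ← sq_sqrt hx0, log_pow, sqrt_sq (sqrt_nonneg x)]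
  exact_mod_cast two_mul_log_le_sub_inv (one_le_sqrt.2 hx)

lemma rpow_half_sub_rpow_neg_half_le_half_mul_sub_inv (hx : 1 ≤ x) :
    x ^ (1 / 2 : ℝ) - x ^ (-(1 / 2) : ℝ) ≤ 1 / 2 * (x - x⁻¹) := by
  have hx0 : 0 ≤ x := by linarith
  have hs : 1 ≤ √x := one_le_sqrt.2 hx
  rw [rpow_neg hx0, ← sqrt_eq_rpow, ← sq_sqrt hx0, sqrt_sq (sqrt_nonneg x), ← sub_nonneg]
  have key : 1 / 2 * (√x ^ 2 - (√x ^ 2)⁻¹) - (√x - (√x)⁻¹) =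
      (√x ^ 2 - 1) * (√x - 1) ^ 2 / (2 * √x ^ 2) := by
    field_simp; ring
  have hs2 : 0 ≤ √x ^ 2 - 1 := by nlinarith
  rw [key]; positivity

lemma half_mul_sub_inv_le_sub_one (hx : 1 ≤ x) : 1 / 2 * (x - x⁻¹) ≤ x - 1 := by
  have hx0 : 0 < x := by linarith
  rw [← sub_nonneg]
  have key : x - 1 - 1 / 2 * (x - x⁻¹) = (x - 1) ^ 2 / (2 * x) := by
    field_simp; ring
  rw [key]; positivity

end Real

namespace Matrix

open scoped MatrixOrder

variable {n : Type*} [Fintype n] [DecidableEq n] {A B : Matrix n n ℂ}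

lemma sq_mul_inv_conj_mul_sq {α : Type*} [CommRing α] {S : Matrix n n α} (hS : IsUnit S.det)
    (G : Matrix n n α) : S * S * (S * G * S)⁻¹ * (S * S) = S * G⁻¹ * S := by
  simp only [mul_inv_rev, mul_assoc, nonsing_inv_mul_cancel_left _ _ hS,
    mul_nonsing_inv_cancel_left _ _ hS]

lemma continuousOn_spectrum (f : ℝ → ℝ) (A : Matrix n n ℂ) : ContinuousOn f (spectrum ℝ A) :=
  A.finite_real_spectrum.continuousOn f

lemma isSelfAdjoint_mpow (A : Matrix n n ℂ) (r : ℝ) : IsSelfAdjoint (mpow A r) :=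
  cfc_predicate _ A

lemma mpow_add (hA : A.PosDef) (r s : ℝ) : mpow A (r + s) = mpow A r * mpow A s := by
  rw [mpow, mpow, mpow, ← cfc_mul _ _ A (continuousOn_spectrum _ A) (continuousOn_spectrum _ A)]
  exact cfc_congr fun x hx ↦ Real.rpow_add (hA.isStrictlyPositive.spectrum_pos hx) r s

lemma mpow_zero (hA : A.IsHermitian) : mpow A 0 = 1 := by
  simp only [mpow, Real.rpow_zero]
  exact cfc_const_one ℝ A

lemma mpow_one (hA : A.IsHermitian) : mpow A 1 = A := by
  simp only [mpow, Real.rpow_one]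
  exact cfc_id' ℝ A

lemma mpow_half_mul_mpow_half (hA : A.PosDef) : mpow A (1 / 2) * mpow A (1 / 2) = A := by
  rw [← mpow_add hA]; norm_num [mpow_one hA.isHermitian]

lemma mpow_half_mul_mpow_neg_half (hA : A.PosDef) : mpow A (1 / 2) * mpow A (-(1 / 2)) = 1 := by
  rw [← mpow_add hA]; norm_num [mpow_zero hA.isHermitian]

lemma mpow_neg_half_mul_mpow_half (hA : A.PosDef) : mpow A (-(1 / 2)) * mpow A (1 / 2) = 1 := by
  rw [← mpow_add hA]; norm_num [mpow_zero hA.isHermitian]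

lemma mpow_half_mul_mpow_neg_half_mul (hA : A.PosDef) (M : Matrix n n ℂ) :
    mpow A (1 / 2) * (mpow A (-(1 / 2)) * M) = M := by
  rw [← mul_assoc, mpow_half_mul_mpow_neg_half hA, one_mul]

lemma isSelfAdjoint_mpow_neg_half_conj (A : Matrix n n ℂ) (hB : B.IsHermitian) :
    IsSelfAdjoint (mpow A (-(1 / 2)) * B * mpow A (-(1 / 2))) :=
  hB.isSelfAdjoint.conjugate_self (isSelfAdjoint_mpow A _)

lemma posDef_mpow_neg_half_conj (hA : A.PosDef) (hB : B.PosDef) :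
    (mpow A (-(1 / 2)) * B * mpow A (-(1 / 2))).PosDef := by
  have hT := IsUnit.of_mul_eq_one _ (mpow_neg_half_mul_mpow_half hA)
  simpa only [(isSelfAdjoint_mpow A _).star_eq] using
    (Matrix.IsUnit.posDef_star_left_conjugate_iff hT).2 hB

lemma mpow_neg_half_conj_self (hA : A.PosDef) :
    mpow A (-(1 / 2)) * A * mpow A (-(1 / 2)) = 1 := by
  nth_rw 2 [← mpow_half_mul_mpow_half hA]
  rw [mul_assoc, mul_assoc, mpow_half_mul_mpow_neg_half hA, mul_one,
    mpow_neg_half_mul_mpow_half hA]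

lemma one_le_mpow_neg_half_conj (hA : A.PosDef) (hAB : A ≤ B) :
    1 ≤ mpow A (-(1 / 2)) * B * mpow A (-(1 / 2)) := by
  have h := (isSelfAdjoint_mpow A (-(1 / 2))).conjugate_le_conjugate hAB
  rwa [mpow_neg_half_conj_self hA] at h

/-- The operator perspective `P_f(A, B)`: `f = log` gives the relative operator entropy `S(A|B)`,
`f = x ^ r` the weighted geometric mean `A #_r B`. -/
noncomputable def perspective (f : ℝ → ℝ) (A B : Matrix n n ℂ) : Matrix n n ℂ :=
  mpow A (1 / 2) * cfc f (mpow A (-(1 / 2)) * B * mpow A (-(1 / 2))) * mpow A (1 / 2)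

lemma perspective_add (f g : ℝ → ℝ) (A B : Matrix n n ℂ) :
    perspective (fun x ↦ f x + g x) A B = perspective f A B + perspective g A B := by
  rw [perspective, cfc_add _ f g (continuousOn_spectrum _ _) (continuousOn_spectrum _ _),
    mul_add, add_mul, perspective, perspective]

lemma perspective_sub (f g : ℝ → ℝ) (A B : Matrix n n ℂ) :
    perspective (fun x ↦ f x - g x) A B = perspective f A B - perspective g A B := by
  rw [perspective, cfc_sub f g _ (continuousOn_spectrum _ _) (continuousOn_spectrum _ _),
    mul_sub, sub_mul, perspective, perspective]

lemma perspective_const_mul (c : ℝ) (f : ℝ → ℝ) (A B : Matrix n n ℂ) :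
    perspective (fun x ↦ c * f x) A B = c • perspective f A B := by
  rw [perspective, cfc_const_mul c f _ (continuousOn_spectrum _ _), mul_smul_comm, smul_mul_assoc,
    perspective]

lemma perspective_id (hA : A.PosDef) (hB : B.IsHermitian) : perspective (fun x ↦ x) A B = B := by
  rw [perspective, cfc_id' ℝ _ (isSelfAdjoint_mpow_neg_half_conj A hB)]
  simp only [mul_assoc, mpow_half_mul_mpow_neg_half_mul hA, mpow_neg_half_mul_mpow_half hA,
    mul_one]

lemma perspective_one (hA : A.PosDef) (hB : B.IsHermitian) : perspective (fun _ ↦ 1) A B = A := by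
  rw [perspective, cfc_const_one ℝ _ (isSelfAdjoint_mpow_neg_half_conj A hB), mul_one,
    mpow_half_mul_mpow_half hA]

lemma perspective_inv (hA : A.PosDef) (hB : B.PosDef) {g : ℝ → ℝ}
    (hg : ∀ x, 0 < x → g x ≠ 0) :
    perspective (fun x ↦ (g x)⁻¹) A B = A * (perspective g A B)⁻¹ * A := by
  have hC := posDef_mpow_neg_half_conj hA hB
  rw [perspective, cfc_inv g _ (fun x hx ↦ hg x (hC.isStrictlyPositive.spectrum_pos hx))
    (continuousOn_spectrum _ _), ← nonsing_inv_eq_ringInverse,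
    ← sq_mul_inv_conj_mul_sq (isUnit_det_of_right_inverse (mpow_half_mul_mpow_neg_half hA)),
    mpow_half_mul_mpow_half hA, perspective]

lemma perspective_inv_self (hA : A.PosDef) (hB : B.PosDef) :
    perspective (fun x ↦ x⁻¹) A B = A * B⁻¹ * A := by
  rw [perspective_inv hA hB (g := fun x ↦ x) fun _ hx ↦ hx.ne', perspective_id hA hB.isHermitian]

lemma perspective_inv_one_add (hA : A.PosDef) (hB : B.PosDef) :
    perspective (fun x ↦ (1 + x)⁻¹) A B = A * (A + B)⁻¹ * A := by
  rw [perspective_inv hA hB fun _ hx ↦ by positivity, perspective_add,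
    perspective_one hA hB.isHermitian, perspective_id hA hB.isHermitian]

lemma perspective_mono (hA : A.PosDef) (hAB : A ≤ B) {f g : ℝ → ℝ}
    (hfg : ∀ x, 1 ≤ x → f x ≤ g x) : perspective f A B ≤ perspective g A B := by
  have hB : B.IsHermitian := by simpa using hA.isHermitian.add hAB.isHermitian
  have hC := one_le_mpow_neg_half_conj hA hAB
  rw [CFC.one_le_iff (R := ℝ) _ (isSelfAdjoint_mpow_neg_half_conj A hB)] at hC
  exact (isSelfAdjoint_mpow A _).conjugate_le_conjugate
    (cfc_mono (fun x hx ↦ hfg x (hC x hx)) (continuousOn_spectrum _ _) (continuousOn_spectrum _ _))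

end Matrix

theorem stmt_18 {n : Type*} [Fintype n] [DecidableEq n]
    (A B : Matrix n n ℂ) (hA : A.PosDef) (hB : B.PosDef) (hAB : (B - A).PosSemidef) :
    (2 • (A - 2 • (A * (A + B)⁻¹ * A)) - (A - A * B⁻¹ * A)).PosSemidef ∧
      ((mpow A (1/2) * mlog (mpow A (-(1/2)) * B * mpow A (-(1/2))) * mpow A (1/2)) -
        2 • (A - 2 • (A * (A + B)⁻¹ * A))).PosSemidef ∧
      ((mpow A (1/2) * mpow (mpow A (-(1/2)) * B * mpow A (-(1/2))) (1/2) * mpow A (1/2) -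
          mpow A (1/2) * mpow (mpow A (-(1/2)) * B * mpow A (-(1/2))) (-(1/2)) * mpow A (1/2)) -
        (mpow A (1/2) * mlog (mpow A (-(1/2)) * B * mpow A (-(1/2))) * mpow A (1/2))).PosSemidef ∧
      (((1/2 : ℝ) • (B - A * B⁻¹ * A)) -
        (mpow A (1/2) * mpow (mpow A (-(1/2)) * B * mpow A (-(1/2))) (1/2) * mpow A (1/2) -
          mpow A (1/2) * mpow (mpow A (-(1/2)) * B * mpow A (-(1/2))) (-(1/2)) * mpow A (1/2))).PosSemidef ∧
      ((B - A) - (1/2 : ℝ) • (B - A * B⁻¹ * A)).PosSemidef := by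
  have hBh := hB.isHermitian
  have mono {f g : ℝ → ℝ} (hfg : ∀ x, 1 ≤ x → f x ≤ g x) :
      (perspective g A B - perspective f A B).PosSemidef :=
    perspective_mono hA hAB hfg
  have hLower : A - A * B⁻¹ * A = perspective (fun x ↦ 1 - x⁻¹) A B := by
    rw [perspective_sub, perspective_one hA hBh, perspective_inv_self hA hB]
  have hHarm : 2 • (A - 2 • (A * (A + B)⁻¹ * A)) =
      perspective (fun x ↦ 2 * (1 - 2 * (1 + x)⁻¹)) A B := by
    rw [perspective_const_mul, perspective_sub, perspective_const_mul, perspective_one hA hBh,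
      perspective_inv_one_add hA hB]
    norm_num [two_smul]
  have hEntropy : mpow A (1/2) * mlog (mpow A (-(1/2)) * B * mpow A (-(1/2))) * mpow A (1/2) =
      perspective Real.log A B := rfl
  have hGeom : mpow A (1/2) * mpow (mpow A (-(1/2)) * B * mpow A (-(1/2))) (1/2) * mpow A (1/2) -
      mpow A (1/2) * mpow (mpow A (-(1/2)) * B * mpow A (-(1/2))) (-(1/2)) * mpow A (1/2) =
      perspective (fun x ↦ x ^ (1 / 2 : ℝ) - x ^ (-(1 / 2) : ℝ)) A B := by
    rw [perspective_sub]; rfl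
  have hUpper : (1/2 : ℝ) • (B - A * B⁻¹ * A) = perspective (fun x ↦ 1 / 2 * (x - x⁻¹)) A B := by
    rw [perspective_const_mul, perspective_sub, perspective_id hA hBh, perspective_inv_self hA hB]
  have hDiff : B - A = perspective (fun x ↦ x - 1) A B := by
    rw [perspective_sub, perspective_id hA hBh, perspective_one hA hBh]
  rw [hLower, hHarm, hEntropy, hGeom, hUpper, hDiff]
  exact ⟨mono fun _ ↦ Real.one_sub_inv_le_two_mul_one_sub_two_mul_inv_one_add,
    mono fun _ ↦ Real.two_mul_one_sub_two_mul_inv_one_add_le_log,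
    mono fun _ ↦ Real.log_le_rpow_half_sub_rpow_neg_half,
    mono fun _ ↦ Real.rpow_half_sub_rpow_neg_half_le_half_mul_sub_inv,
    mono fun _ ↦ Real.half_mul_sub_inv_le_sub_one⟩
end
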